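/- arXiv:2009.13814 — 3 statements merged into one kernel-verified Lean document; each statement's English description precedes it below -/
import Mathlib

section
/- Let f be a measurable function on ℝⁿ, Q a cube, and m_f(Q) a median value of f on Q, i.e., a real number such that both |{x ∈ Q : f(x) > m_f(Q)}| ≤ |Q|/2 and |{x ∈ Q : f(x) < m_f(Q)}| ≤ |Q|/2. Then |m_f(Q)| ≤ (f·1_Q)*(|Q|/2), where (f·1_Q)* denotes the decreasing rearrangement of f·1_Q. -/
open MeasureTheory Set Filter

noncomputable section

/-- `Q ⊆ ℝⁿ` is a cube (axis-parallel, with positive side length). -/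
def IsCube {n : ℕ} (Q : Set (Fin n → ℝ)) : Prop :=
  ∃ (a : Fin n → ℝ) (h : ℝ), 0 < h ∧ Q = Set.univ.pi fun i => Set.Ico (a i) (a i + h)

/-- The decreasing rearrangement
`g*(t) = inf {α > 0 : |{x : |g(x)| > α}| < t}`. -/
def decRearr {n : ℕ} (g : (Fin n → ℝ) → ℝ) (t : ℝ) : ℝ :=
  sInf {α : ℝ | 0 < α ∧ volume {x | α < |g x|} < ENNReal.ofReal t}

/-! A median `m` of `f` on `Q` forces `|f| ≥ |m|` on at least half of `Q`, so every level `b < |m|`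
has `|{|f 1_Q| > b}| ≥ |Q|/2` and is excluded from the set defining `(f 1_Q)*(|Q|/2)`. That set is
nonempty because the distribution function of `f 1_Q` tends to `0`, as `Q` has finite measure. -/

section Median

variable {α : Type*} [MeasurableSpace α] {μ : Measure α} {Q : Set α} {f : α → ℝ} {m b : ℝ}

theorem half_le_measure_sep_le_of_median (hQ : μ Q ≠ ⊤)
    (h : μ {x ∈ Q | f x < m} ≤ μ Q / 2) : μ Q / 2 ≤ μ {x ∈ Q | m ≤ f x} := by
  have hcover : μ Q ≤ μ {x ∈ Q | f x < m} + μ {x ∈ Q | m ≤ f x} := by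
    refine (measure_mono fun x hx => ?_).trans (measure_union_le _ _)
    rcases lt_or_ge (f x) m with hlt | hge
    exacts [Or.inl ⟨hx, hlt⟩, Or.inr ⟨hx, hge⟩]
  calc μ Q / 2 = μ Q - μ Q / 2 := (ENNReal.sub_half hQ).symm
    _ ≤ μ Q - μ {x ∈ Q | f x < m} := tsub_le_tsub_left h _
    _ ≤ μ {x ∈ Q | m ≤ f x} := tsub_le_iff_left.mpr hcover

theorem half_le_measure_lt_abs_indicator_of_median (hQ : μ Q ≠ ⊤)
    (h₁ : μ {x ∈ Q | m < f x} ≤ μ Q / 2) (h₂ : μ {x ∈ Q | f x < m} ≤ μ Q / 2) (hb : b < |m|) :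
    μ Q / 2 ≤ μ {x | b < |Q.indicator f x|} := by
  rcases lt_abs.mp hb with hb | hb
  · refine (half_le_measure_sep_le_of_median hQ h₂).trans (measure_mono ?_)
    rintro x ⟨hxQ, hmx⟩
    simp only [mem_ofPred_eq, indicator_of_mem hxQ]
    linarith [le_abs_self (f x)]
  · have h₁' : μ {x ∈ Q | -f x < -m} ≤ μ Q / 2 := by simpa only [neg_lt_neg_iff] using h₁
    refine (half_le_measure_sep_le_of_median hQ h₁').trans (measure_mono ?_)
    rintro x ⟨hxQ, hmx⟩
    simp only [mem_ofPred_eq, indicator_of_mem hxQ]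
    linarith [neg_le_abs (f x)]

end Median

section Distribution

variable {α : Type*} [MeasurableSpace α] {μ : Measure α} {g : α → ℝ}

theorem tendsto_measure_lt_abs_atTop (hg : AEMeasurable g μ)
    (hfin : ∃ t, μ {x | t < |g x|} ≠ ⊤) :
    Tendsto (fun t : ℝ => μ {x | t < |g x|}) atTop (nhds 0) := by
  have hempty : ⋂ t : ℝ, {x | t < |g x|} = ∅ :=
    eq_empty_of_forall_notMem fun x hx => lt_irrefl |g x| (mem_iInter.mp hx |g x|)
  have := tendsto_measure_iInter_atTop (s := fun t : ℝ => {x | t < |g x|})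
    (fun t => nullMeasurableSet_lt aemeasurable_const hg.abs)
    (fun _ _ hst _ hx => hst.trans_lt hx) hfin
  rwa [hempty, measure_empty] at this

end Distribution

theorem setOf_lt_abs_indicator_subset {α : Type*} {g : α → ℝ} {Q : Set α} {t : ℝ} (ht : 0 ≤ t) :
    {x | t < |Q.indicator g x|} ⊆ Q := fun x hx => by
  by_contra hxQ
  simp only [mem_ofPred_eq, indicator_of_notMem hxQ, abs_zero] at hx
  exact hx.not_ge ht

theorem IsCube.measurableSet {n : ℕ} {Q : Set (Fin n → ℝ)} (hQ : IsCube Q) : MeasurableSet Q := by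
  obtain ⟨a, h, -, rfl⟩ := hQ
  exact MeasurableSet.univ_pi fun i => measurableSet_Ico

theorem IsCube.volume_eq {n : ℕ} {Q : Set (Fin n → ℝ)} (hQ : IsCube Q) :
    ∃ h : ℝ, 0 < h ∧ volume Q = ENNReal.ofReal h ^ n := by
  obtain ⟨a, h, hh, rfl⟩ := hQ
  refine ⟨h, hh, ?_⟩
  simp [volume_pi_pi, Real.volume_Ico]

theorem IsCube.volume_ne_zero {n : ℕ} {Q : Set (Fin n → ℝ)} (hQ : IsCube Q) : volume Q ≠ 0 := by
  obtain ⟨h, hh, hvol⟩ := hQ.volume_eq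
  rw [hvol]
  exact pow_ne_zero n (ENNReal.ofReal_pos.mpr hh).ne'

theorem IsCube.volume_ne_top {n : ℕ} {Q : Set (Fin n → ℝ)} (hQ : IsCube Q) : volume Q ≠ ⊤ := by
  obtain ⟨h, -, hvol⟩ := hQ.volume_eq
  rw [hvol]
  exact ENNReal.pow_ne_top ENNReal.ofReal_ne_top

/-- A median value of `f` on a cube `Q` is bounded by `(f·1_Q)*(|Q|/2)`. -/
theorem abs_median_le_decRearr {n : ℕ} (f : (Fin n → ℝ) → ℝ) (hf : Measurable f)
    (Q : Set (Fin n → ℝ)) (hQ : IsCube Q) (med : ℝ)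
    (h₁ : volume {x ∈ Q | med < f x} ≤ volume Q / 2)
    (h₂ : volume {x ∈ Q | f x < med} ≤ volume Q / 2) :
    |med| ≤ decRearr (Q.indicator f) ((volume Q).toReal / 2) := by
  have hhalf : ENNReal.ofReal ((volume Q).toReal / 2) = volume Q / 2 := by
    rw [ENNReal.ofReal_div_of_pos two_pos, ENNReal.ofReal_toReal hQ.volume_ne_top,
      ENNReal.ofReal_ofNat]
  have htendsto := tendsto_measure_lt_abs_atTop (hf.indicator hQ.measurableSet).aemeasurable
    ⟨0, ne_top_of_le_ne_top hQ.volume_ne_top (measure_mono (setOf_lt_abs_indicator_subset le_rfl))⟩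
  obtain ⟨a, ha_pos, ha⟩ := ((eventually_gt_atTop 0).and
    (htendsto.eventually_lt_const (ENNReal.half_pos hQ.volume_ne_zero))).exists
  unfold decRearr
  refine le_csInf ⟨a, ha_pos, hhalf ▸ ha⟩ fun b ⟨_, hb⟩ => not_lt.mp fun hlt => ?_
  exact (half_le_measure_lt_abs_indicator_of_median hQ.volume_ne_top h₁ h₂ hlt).not_gt
    (hhalf ▸ hb)

end
end

section
/- Let β₁,…,β_m ≥ 0 with β := ∑_{i=1}^m β_i < 1, and let 𝒮 be an η-sparse family of dyadic cubes (0 < η < 1). Then for every cube Q ∈ 𝒮 and all weights w₁,…,w_m, ∑_{Q' ∈ 𝒮, Q' ⊆ Q} |Q'| ∏_{i=1}^m ⟨w_i⟩_{Q'}^{β_i} ≤ C(η, β, n) |Q| ∏_{i=1}^m ⟨w_i⟩_Q^{β_i}, where ⟨w⟩_Q = (1/|Q|)∫_Q w dx. -/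
open MeasureTheory Set Filter ENNReal

noncomputable section

/-- A dyadic grid: a countable family of cubes, any two of which are nested or disjoint. -/
def IsDyadicGrid {n : ℕ} (𝒟 : Set (Set (Fin n → ℝ))) : Prop :=
  (∀ Q ∈ 𝒟, IsCube Q) ∧
  (∀ Q ∈ 𝒟, ∀ Q' ∈ 𝒟, Q ⊆ Q' ∨ Q' ⊆ Q ∨ Q ∩ Q' = ∅) ∧ 𝒟.Countable

/-- `𝒮` is `η`-sparse: each `Q ∈ 𝒮` contains a measurable portion `E_Q` of measure at least
`η|Q|`, the portions being pairwise disjoint. -/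
def IsSparse {n : ℕ} (η : ℝ) (𝒮 : Set (Set (Fin n → ℝ))) : Prop :=
  ∃ E : Set (Fin n → ℝ) → Set (Fin n → ℝ),
    (∀ Q ∈ 𝒮, E Q ⊆ Q ∧ MeasurableSet (E Q) ∧ ENNReal.ofReal η * volume Q ≤ volume (E Q)) ∧
    𝒮.Pairwise fun Q Q' => Disjoint (E Q) (E Q')

/-- The average `⟨w⟩_Q = (1/|Q|) ∫_Q w`. -/
def lavg {n : ℕ} (w : (Fin n → ℝ) → ℝ≥0∞) (Q : Set (Fin n → ℝ)) : ℝ≥0∞ :=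
  (∫⁻ x in Q, w x) / volume Q

/-!
Put `a₀ = ∏ ⟨wᵢ⟩_Q^{βᵢ}` and fix `ρ > 2` with `ρ^β ≤ 2`, which is possible because `β < 1`.
If a cube `P ⊆ Q` has `∏ ⟨wᵢ⟩_P^{βᵢ} > 2ᵏ a₀`, then `⟨wᵢ⟩_P > ρᵏ ⟨wᵢ⟩_Q` for some `i` with
`βᵢ ≠ 0`. The cubes of a dyadic grid are nested or disjoint, so the maximal ones among such cubes
show that they cover a set of measure at most `ρ⁻ᵏ |Q|` for each `i`; by sparseness the sum of
their measures is then at most `η⁻¹ m ρ⁻ᵏ |Q|`. Splitting the sum into the layers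
`2ᵏ a₀ < ∏ ⟨wᵢ⟩_P^{βᵢ} ≤ 2ᵏ⁺¹ a₀` leaves a geometric series of ratio `2/ρ < 1`.
-/

section NestedFamily

variable {α : Type*} {𝒞 : Set (Set α)}

theorem Set.Finite.exists_pairwise_disjoint_sUnion_eq (hfin : 𝒞.Finite)
    (hnest : ∀ P ∈ 𝒞, ∀ P' ∈ 𝒞, P ⊆ P' ∨ P' ⊆ P ∨ P ∩ P' = ∅) :
    ∃ ℳ ⊆ 𝒞, ℳ.Pairwise Disjoint ∧ ⋃₀ ℳ = ⋃₀ 𝒞 := by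
  refine ⟨{P | Maximal (· ∈ 𝒞) P}, fun P hP => hP.prop, ?_, ?_⟩
  · intro P hP P' hP' hne
    rcases hnest P hP.prop P' hP'.prop with h | h | h
    · exact absurd (hP.eq_of_le hP'.prop h) hne
    · exact absurd (hP'.eq_of_le hP.prop h).symm hne
    · exact Set.disjoint_iff_inter_eq_empty.2 h
  · refine (sUnion_mono fun P hP => hP.prop).antisymm (sUnion_subset fun P hP => ?_)
    obtain ⟨P', hPP', hP'⟩ := hfin.exists_le_maximal hP
    exact hPP'.trans (subset_sUnion_of_mem hP')

variable [MeasurableSpace α] {μ : Measure α} {v : α → ℝ≥0∞} {κ : ℝ≥0∞}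

theorem Set.Finite.mul_measure_sUnion_le_setLIntegral (hfin : 𝒞.Finite)
    (hnest : ∀ P ∈ 𝒞, ∀ P' ∈ 𝒞, P ⊆ P' ∨ P' ⊆ P ∨ P ∩ P' = ∅)
    (hmeas : ∀ P ∈ 𝒞, MeasurableSet P) (hbound : ∀ P ∈ 𝒞, κ * μ P ≤ ∫⁻ x in P, v x ∂μ) :
    κ * μ (⋃₀ 𝒞) ≤ ∫⁻ x in ⋃₀ 𝒞, v x ∂μ := by
  obtain ⟨ℳ, hℳ𝒞, hdisj, hunion⟩ := hfin.exists_pairwise_disjoint_sUnion_eq hnest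
  have hℳ : ℳ.Countable := (hfin.subset hℳ𝒞).countable
  calc κ * μ (⋃₀ 𝒞)
      = ∑' P : ℳ, κ * μ P := by
        rw [← hunion, measure_sUnion hℳ hdisj fun P hP => hmeas P (hℳ𝒞 hP),
          ENNReal.tsum_mul_left]
    _ ≤ ∑' P : ℳ, ∫⁻ x in P, v x ∂μ := ENNReal.tsum_le_tsum fun P => hbound P (hℳ𝒞 P.2)
    _ = ∫⁻ x in ⋃₀ 𝒞, v x ∂μ := by
        rw [← hunion, sUnion_eq_biUnion,
          lintegral_biUnion hℳ (fun P hP => hmeas P (hℳ𝒞 hP)) hdisj]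

theorem Set.Countable.mul_measure_sUnion_le_setLIntegral (hc : 𝒞.Countable)
    (hnest : ∀ P ∈ 𝒞, ∀ P' ∈ 𝒞, P ⊆ P' ∨ P' ⊆ P ∨ P ∩ P' = ∅)
    (hmeas : ∀ P ∈ 𝒞, MeasurableSet P) (hbound : ∀ P ∈ 𝒞, κ * μ P ≤ ∫⁻ x in P, v x ∂μ) :
    κ * μ (⋃₀ 𝒞) ≤ ∫⁻ x in ⋃₀ 𝒞, v x ∂μ := by
  rcases 𝒞.eq_empty_or_nonempty with rfl | hne
  · simp
  obtain ⟨e, rfl⟩ := hc.exists_eq_range hne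
  rw [sUnion_range, measure_iUnion_eq_iSup_accumulate, ENNReal.mul_iSup]
  refine iSup_le fun N => ?_
  have hsub : e '' Iic N ⊆ range e := image_subset_range e _
  have hacc : accumulate e N = ⋃₀ (e '' Iic N) := by
    rw [accumulate_def, sUnion_image]
    rfl
  rw [hacc]
  refine ((finite_Iic N).image e).mul_measure_sUnion_le_setLIntegral
    (fun P hP P' hP' => hnest P (hsub hP) P' (hsub hP')) (fun P hP => hmeas P (hsub hP))
    (fun P hP => hbound P (hsub hP)) |>.trans (lintegral_mono_set ?_)
  exact (sUnion_mono hsub).trans (sUnion_range e).subset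

end NestedFamily

namespace ENNReal

theorem rpow_sum {ι : Type*} {x : ℝ≥0∞} (hx : x ≠ 0) (hx' : x ≠ ⊤) (s : Finset ι) (f : ι → ℝ) :
    x ^ (∑ i ∈ s, f i) = ∏ i ∈ s, x ^ f i := by
  classical
  induction s using Finset.induction_on with
  | empty => simp
  | insert i s hi ih => rw [Finset.prod_insert hi, Finset.sum_insert hi, rpow_add _ _ hx hx', ih]

theorem prod_rpow_le_rpow_sum_mul_prod_rpow {ι : Type*} {s : Finset ι} {x y : ι → ℝ≥0∞}
    {β : ι → ℝ} {t : ℝ≥0∞} (hβ : ∀ i ∈ s, 0 ≤ β i) (ht : t ≠ 0) (ht' : t ≠ ⊤)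
    (hxy : ∀ i ∈ s, β i ≠ 0 → x i ≤ t * y i) :
    ∏ i ∈ s, x i ^ β i ≤ t ^ (∑ i ∈ s, β i) * ∏ i ∈ s, y i ^ β i := by
  rw [rpow_sum ht ht', ← Finset.prod_mul_distrib]
  refine Finset.prod_le_prod' fun i hi => ?_
  rcases eq_or_ne (β i) 0 with h | h
  · simp [h]
  · rw [← mul_rpow_of_nonneg _ _ (hβ i hi)]
    exact rpow_le_rpow (hxy i hi h) (hβ i hi)

theorem le_add_tsum_ite_two_pow_mul (a : ℝ≥0∞) {c : ℝ≥0∞} (hc : c ≠ 0) :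
    a ≤ c + ∑' k : ℕ, if 2 ^ k * c < a then 2 ^ (k + 1) * c else 0 := by
  classical
  rcases le_or_gt a c with hac | hca
  · exact le_add_right hac
  rcases eq_or_ne a ⊤ with rfl | ha
  · refine le_add_left (top_le_iff.1 ?_).ge
    calc ⊤ = ∑' _ : ℕ, c := (tsum_const_eq_top_of_ne_zero hc).symm
      _ ≤ _ := ENNReal.tsum_le_tsum fun k => by
        rw [if_pos (mul_lt_top (pow_lt_top ofNat_lt_top) hca)]
        exact le_mul_of_one_le_left' (one_le_pow₀ one_le_two)
  have hex : ∃ k : ℕ, a ≤ 2 ^ (k + 1) * c := by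
    obtain ⟨N, hN⟩ := ENNReal.exists_nat_gt (div_lt_top ha hc).ne
    refine ⟨N, ((ENNReal.div_lt_iff (Or.inl hc) (Or.inl hca.ne_top)).1 hN).le.trans ?_⟩
    gcongr
    exact_mod_cast (Nat.lt_two_pow_self.trans (Nat.pow_lt_pow_succ (by norm_num))).le
  have hk := Nat.find_spec hex
  have hlow : 2 ^ Nat.find hex * c < a := by
    rcases Nat.eq_zero_or_eq_succ_pred (Nat.find hex) with h | h
    · simpa [h] using hca
    · rw [h]
      exact not_le.1 (Nat.find_min hex (by omega))
  refine hk.trans (le_add_left ?_)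
  simpa [hlow] using ENNReal.le_tsum (f := fun k : ℕ => if 2 ^ k * c < a then 2 ^ (k + 1) * c else 0)
    (Nat.find hex)

theorem tsum_mul_le_add_tsum_two_pow_mul {ι : Type*} (s a : ι → ℝ≥0∞) {c : ℝ≥0∞}
    (hc : c ≠ 0) :
    ∑' i, s i * a i ≤
      c * ∑' i, s i + ∑' k : ℕ, 2 ^ (k + 1) * c * ∑' i : {i | 2 ^ k * c < a i}, s i := by
  classical
  calc ∑' i, s i * a i
      ≤ ∑' i, s i * (c + ∑' k : ℕ, if 2 ^ k * c < a i then 2 ^ (k + 1) * c else 0) :=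
        ENNReal.tsum_le_tsum fun i => by gcongr; exact le_add_tsum_ite_two_pow_mul (a i) hc
    _ = c * ∑' i, s i + ∑' k : ℕ, 2 ^ (k + 1) * c * ∑' i, {i | 2 ^ k * c < a i}.indicator s i := by
        simp only [mul_add, ENNReal.tsum_add, ← ENNReal.tsum_mul_left]
        rw [ENNReal.tsum_comm]
        congr 1
        · exact tsum_congr fun i => mul_comm _ _
        · refine tsum_congr fun k => tsum_congr fun i => ?_
          simp only [Set.indicator_apply, Set.mem_ofPred_eq, mul_ite, ite_mul, mul_zero, zero_mul,
            mul_comm (s i)]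
    _ = _ := by simp only [tsum_subtype]

end ENNReal

theorem exists_two_lt_rpow_le_two {b : ℝ} (hb : 0 ≤ b) (hb1 : b < 1) :
    ∃ ρ : ℝ≥0∞, 2 < ρ ∧ ρ ≠ ⊤ ∧ ρ ^ b ≤ 2 := by
  have hb' : 0 < 1 + b := by linarith
  refine ⟨2 ^ (2 / (1 + b)), ?_, ENNReal.rpow_ne_top_of_nonneg (by positivity) ofNat_ne_top, ?_⟩
  · conv_lhs => rw [← ENNReal.rpow_one 2]
    exact ENNReal.rpow_lt_rpow_of_exponent_lt one_lt_two ofNat_ne_top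
      ((one_lt_div hb').2 (by linarith))
  · rw [← ENNReal.rpow_mul]
    conv_rhs => rw [← ENNReal.rpow_one 2]
    exact ENNReal.rpow_le_rpow_of_exponent_le one_le_two
      (by rw [div_mul_eq_mul_div, div_le_one hb']; linarith)

section Cubes

variable {n : ℕ}

namespace IsCube

variable {Q : Set (Fin n → ℝ)}

theorem measurableSet_s7 (hQ : IsCube Q) : MeasurableSet Q := by
  obtain ⟨a, h, -, rfl⟩ := hQ
  exact MeasurableSet.univ_pi fun i => measurableSet_Ico

theorem exists_volume_eq (hQ : IsCube Q) : ∃ h : ℝ, 0 < h ∧ volume Q = ENNReal.ofReal h ^ n := by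
  obtain ⟨a, h, hh, rfl⟩ := hQ
  exact ⟨h, hh, by simp [volume_pi_pi, Real.volume_Ico]⟩

theorem volume_ne_zero_s7 (hQ : IsCube Q) : volume Q ≠ 0 := by
  obtain ⟨h, hh, hQ⟩ := hQ.exists_volume_eq
  rw [hQ]
  exact pow_ne_zero _ (ENNReal.ofReal_pos.2 hh).ne'

theorem volume_ne_top_s7 (hQ : IsCube Q) : volume Q ≠ ⊤ := by
  obtain ⟨h, -, hQ⟩ := hQ.exists_volume_eq
  rw [hQ]
  exact ENNReal.pow_ne_top ENNReal.ofReal_ne_top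

theorem lavg_mul_volume (hQ : IsCube Q) (w : (Fin n → ℝ) → ℝ≥0∞) :
    lavg w Q * volume Q = ∫⁻ x in Q, w x :=
  ENNReal.div_mul_cancel hQ.volume_ne_zero_s7 hQ.volume_ne_top_s7

end IsCube

theorem lavg_eq_zero_of_subset {w : (Fin n → ℝ) → ℝ≥0∞} {P Q : Set (Fin n → ℝ)}
    (hw : lavg w Q = 0) (hQ : volume Q ≠ ⊤) (hPQ : P ⊆ Q) : lavg w P = 0 := by
  have hQw : ∫⁻ x in Q, w x = 0 := (ENNReal.div_eq_zero_iff.1 hw).resolve_right hQ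
  have hPw : ∫⁻ x in P, w x = 0 := nonpos_iff_eq_zero.1 (hQw ▸ lintegral_mono_set hPQ)
  simp [lavg, hPw]

theorem IsSparse.ofReal_mul_tsum_volume_le {η : ℝ} {𝒮 : Set (Set (Fin n → ℝ))}
    (hS : IsSparse η 𝒮) {ι : Type*} {f : ι → Set (Fin n → ℝ)} (hf : Function.Injective f)
    (hf𝒮 : ∀ i, f i ∈ 𝒮) :
    ENNReal.ofReal η * ∑' i, volume (f i) ≤ volume (⋃ i, f i) := by
  obtain ⟨E, hE, hdisj⟩ := hS
  calc ENNReal.ofReal η * ∑' i, volume (f i)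
      = ∑' i, ENNReal.ofReal η * volume (f i) := ENNReal.tsum_mul_left.symm
    _ ≤ ∑' i, volume (E (f i)) := ENNReal.tsum_le_tsum fun i => (hE _ (hf𝒮 i)).2.2
    _ ≤ volume (⋃ i, E (f i)) := tsum_meas_le_meas_iUnion_of_disjoint _
        (fun i => (hE _ (hf𝒮 i)).2.1) fun i j hij => hdisj (hf𝒮 i) (hf𝒮 j) (hf.ne hij)
    _ ≤ volume (⋃ i, f i) := measure_mono (iUnion_mono fun i => (hE _ (hf𝒮 i)).1)

namespace IsDyadicGrid

variable {𝒟 : Set (Set (Fin n → ℝ))} {Q : Set (Fin n → ℝ)}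

theorem mul_volume_sUnion_lavg_gt_le (h𝒟 : IsDyadicGrid 𝒟) (hQ : IsCube Q)
    {w : (Fin n → ℝ) → ℝ≥0∞} (hw : lavg w Q ≠ 0) (hw' : lavg w Q ≠ ⊤) (t : ℝ≥0∞) :
    t * volume (⋃₀ {P | P ∈ 𝒟 ∧ P ⊆ Q ∧ t * lavg w Q < lavg w P}) ≤ volume Q := by
  obtain ⟨hcube, hnest, hcount⟩ := h𝒟
  set 𝒞 := {P | P ∈ 𝒟 ∧ P ⊆ Q ∧ t * lavg w Q < lavg w P}
  have hweak : t * lavg w Q * volume (⋃₀ 𝒞) ≤ ∫⁻ x in ⋃₀ 𝒞, w x :=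
    (hcount.mono fun P hP => hP.1).mul_measure_sUnion_le_setLIntegral
      (fun P hP P' hP' => hnest P hP.1 P' hP'.1) (fun P hP => (hcube P hP.1).measurableSet_s7)
      fun P hP => by
        rw [← (hcube P hP.1).lavg_mul_volume]
        exact mul_le_mul_left hP.2.2.le _
  rw [← ENNReal.mul_le_mul_iff_right hw hw', ← mul_assoc, mul_comm _ t, hQ.lavg_mul_volume]
  exact hweak.trans (lintegral_mono_set (sUnion_subset fun P hP => hP.2.1))

theorem mul_volume_sUnion_prod_lavg_rpow_gt_le {m : ℕ} (h𝒟 : IsDyadicGrid 𝒟) (hQ : IsCube Q)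
    {β : Fin m → ℝ} (hβ : ∀ i, 0 ≤ β i) {w : Fin m → (Fin n → ℝ) → ℝ≥0∞}
    (hw : ∀ i, β i ≠ 0 → lavg (w i) Q ≠ 0 ∧ lavg (w i) Q ≠ ⊤) {t : ℝ≥0∞} (ht : t ≠ 0)
    (ht' : t ≠ ⊤) :
    t * volume (⋃₀ {P | P ∈ 𝒟 ∧ P ⊆ Q ∧
        t ^ (∑ i, β i) * ∏ i, lavg (w i) Q ^ β i < ∏ i, lavg (w i) P ^ β i}) ≤
      m * volume Q := by
  classical
  set I := Finset.univ.filter fun i => β i ≠ 0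
  have hcover : ⋃₀ {P | P ∈ 𝒟 ∧ P ⊆ Q ∧
        t ^ (∑ i, β i) * ∏ i, lavg (w i) Q ^ β i < ∏ i, lavg (w i) P ^ β i} ⊆
      ⋃ i ∈ I, ⋃₀ {P | P ∈ 𝒟 ∧ P ⊆ Q ∧ t * lavg (w i) Q < lavg (w i) P} := by
    rintro x ⟨P, ⟨hP𝒟, hPQ, hlt⟩, hxP⟩
    obtain ⟨i, hi, hPi⟩ : ∃ i, β i ≠ 0 ∧ t * lavg (w i) Q < lavg (w i) P := by
      by_contra! h
      exact hlt.not_ge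
        (ENNReal.prod_rpow_le_rpow_sum_mul_prod_rpow (fun i _ => hβ i) ht ht' fun i _ => h i)
    exact mem_biUnion (Finset.mem_filter.2 ⟨Finset.mem_univ i, hi⟩) ⟨P, ⟨hP𝒟, hPQ, hPi⟩, hxP⟩
  calc _ ≤ t * ∑ i ∈ I, volume (⋃₀ {P | P ∈ 𝒟 ∧ P ⊆ Q ∧ t * lavg (w i) Q < lavg (w i) P}) :=
        mul_le_mul_right ((measure_mono hcover).trans (measure_biUnion_finset_le _ _)) _
    _ ≤ ∑ _i ∈ I, volume Q := by
        rw [Finset.mul_sum]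
        refine Finset.sum_le_sum fun i hi => ?_
        obtain ⟨hw0, hwtop⟩ := hw i (Finset.mem_filter.1 hi).2
        exact h𝒟.mul_volume_sUnion_lavg_gt_le hQ hw0 hwtop t
    _ ≤ m * volume Q := by
        rw [Finset.sum_const, nsmul_eq_mul]
        gcongr
        exact_mod_cast (Finset.card_filter_le _ _).trans_eq (Finset.card_fin m)

end IsDyadicGrid

namespace IsSparse

variable {η : ℝ} {𝒮 𝒟 : Set (Set (Fin n → ℝ))} {Q : Set (Fin n → ℝ)} {m : ℕ} {β : Fin m → ℝ}
  {ρ : ℝ≥0∞} {w : Fin m → (Fin n → ℝ) → ℝ≥0∞}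

theorem tsum_volume_mul_prod_lavg_rpow_le_of_lavg_ne (hS : IsSparse η 𝒮) (hη : 0 < η)
    (h𝒟 : IsDyadicGrid 𝒟) (h𝒮𝒟 : 𝒮 ⊆ 𝒟) (hQ : IsCube Q) (hβ : ∀ i, 0 ≤ β i) (hρ : ρ ≠ 0)
    (hρ' : ρ ≠ ⊤) (hρβ : ρ ^ (∑ i, β i) ≤ 2)
    (hw : ∀ i, β i ≠ 0 → lavg (w i) Q ≠ 0 ∧ lavg (w i) Q ≠ ⊤) :
    ∑' P : {P // P ∈ 𝒮 ∧ P ⊆ Q}, volume P.1 * ∏ i, lavg (w i) P.1 ^ β i ≤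
      (ENNReal.ofReal η)⁻¹ * (1 + 2 * m * (1 - 2 * ρ⁻¹)⁻¹) * volume Q *
        ∏ i, lavg (w i) Q ^ β i := by
  set a₀ := ∏ i, lavg (w i) Q ^ β i
  have ha₀ : a₀ ≠ 0 := Finset.prod_ne_zero_iff.2 fun i _ h => by
    rcases ENNReal.rpow_eq_zero_iff.1 h with ⟨h0, hpos⟩ | ⟨-, hneg⟩
    · exact (hw i hpos.ne').1 h0
    · exact (hβ i).not_gt hneg
  have hη₀ : ENNReal.ofReal η ≠ 0 := (ENNReal.ofReal_pos.2 hη).ne'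
  have hbase : ∑' P : {P // P ∈ 𝒮 ∧ P ⊆ Q}, volume P.1 ≤ (ENNReal.ofReal η)⁻¹ * volume Q := by
    rw [← ENNReal.mul_le_iff_le_inv hη₀ ENNReal.ofReal_ne_top]
    exact (hS.ofReal_mul_tsum_volume_le Subtype.val_injective fun P => P.2.1).trans
      (measure_mono (iUnion_subset fun P => P.2.2))
  have hlevel : ∀ k : ℕ,
      ∑' P : {P : {P // P ∈ 𝒮 ∧ P ⊆ Q} | 2 ^ k * a₀ < ∏ i, lavg (w i) P.1 ^ β i}, volume P.1.1 ≤
        (ENNReal.ofReal η)⁻¹ * ((ρ ^ k)⁻¹ * (m * volume Q)) := by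
    intro k
    have hρk : ρ ^ k ≠ 0 := pow_ne_zero _ hρ
    have hρk' : ρ ^ k ≠ ⊤ := ENNReal.pow_ne_top hρ'
    have hpow : (ρ ^ k) ^ (∑ i, β i) ≤ 2 ^ k := by
      rw [← ENNReal.rpow_natCast_mul, mul_comm, ENNReal.rpow_mul_natCast]
      gcongr
    rw [← ENNReal.mul_le_iff_le_inv hη₀ ENNReal.ofReal_ne_top]
    refine (hS.ofReal_mul_tsum_volume_le (Subtype.val_injective.comp Subtype.val_injective)
      fun P => P.1.2.1).trans ?_
    rw [← ENNReal.mul_le_iff_le_inv hρk hρk']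
    refine le_trans ?_ (h𝒟.mul_volume_sUnion_prod_lavg_rpow_gt_le hQ hβ hw hρk hρk')
    gcongr
    exact iUnion_subset fun P => subset_sUnion_of_mem
      ⟨h𝒮𝒟 P.1.2.1, P.1.2.2, (mul_le_mul_left hpow a₀).trans_lt P.2⟩
  have hterm : ∀ k : ℕ, 2 ^ (k + 1) * a₀ * ((ENNReal.ofReal η)⁻¹ * ((ρ ^ k)⁻¹ * (m * volume Q))) =
      2 * m * (ENNReal.ofReal η)⁻¹ * volume Q * a₀ * (2 * ρ⁻¹) ^ k := by
    intro k
    rw [ENNReal.inv_pow, mul_pow, pow_succ]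
    ring
  calc _ ≤ a₀ * ∑' P : {P // P ∈ 𝒮 ∧ P ⊆ Q}, volume P.1 + ∑' k : ℕ, 2 ^ (k + 1) * a₀ *
          ∑' P : {P : {P // P ∈ 𝒮 ∧ P ⊆ Q} | 2 ^ k * a₀ < ∏ i, lavg (w i) P.1 ^ β i},
            volume P.1.1 :=
        ENNReal.tsum_mul_le_add_tsum_two_pow_mul _ _ ha₀
    _ ≤ a₀ * ((ENNReal.ofReal η)⁻¹ * volume Q) + ∑' k : ℕ, 2 ^ (k + 1) * a₀ *
          ((ENNReal.ofReal η)⁻¹ * ((ρ ^ k)⁻¹ * (m * volume Q))) := by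
        gcongr with k
        exact hlevel k
    _ = _ := by
        rw [tsum_congr hterm, ENNReal.tsum_mul_left, ENNReal.tsum_geometric]
        ring

theorem tsum_volume_mul_prod_lavg_rpow_le (hS : IsSparse η 𝒮) (hη : 0 < η)
    (h𝒟 : IsDyadicGrid 𝒟) (h𝒮𝒟 : 𝒮 ⊆ 𝒟) (hQ : IsCube Q) (hβ : ∀ i, 0 ≤ β i) (hρ : ρ ≠ 0)
    (hρ' : ρ ≠ ⊤) (hρβ : ρ ^ (∑ i, β i) ≤ 2) :
    ∑' P : {P // P ∈ 𝒮 ∧ P ⊆ Q}, volume P.1 * ∏ i, lavg (w i) P.1 ^ β i ≤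
      (ENNReal.ofReal η)⁻¹ * (1 + 2 * m * (1 - 2 * ρ⁻¹)⁻¹) * volume Q *
        ∏ i, lavg (w i) Q ^ β i := by
  by_cases hzero : ∃ i, β i ≠ 0 ∧ lavg (w i) Q = 0
  · obtain ⟨i, hi, hiQ⟩ := hzero
    have hvanish : ∀ P : {P // P ∈ 𝒮 ∧ P ⊆ Q}, ∏ j, lavg (w j) P.1 ^ β j = 0 := fun P =>
      Finset.prod_eq_zero (Finset.mem_univ i) <| by
        rw [lavg_eq_zero_of_subset hiQ hQ.volume_ne_top_s7 P.2.2]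
        exact ENNReal.zero_rpow_of_pos ((hβ i).lt_of_ne' hi)
    simp [hvanish]
  push Not at hzero
  by_cases htop : ∃ i, β i ≠ 0 ∧ lavg (w i) Q = ⊤
  · obtain ⟨i, hi, hiQ⟩ := htop
    have hprod : ∏ i, lavg (w i) Q ^ β i = ⊤ := by
      refine WithTop.prod_eq_top (Finset.mem_univ i) ?_ fun j _ h => ?_
      · rw [hiQ]
        exact ENNReal.top_rpow_of_pos ((hβ i).lt_of_ne' hi)
      · rcases ENNReal.rpow_eq_zero_iff.1 h with ⟨h0, hpos⟩ | ⟨-, hneg⟩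
        · exact hzero j hpos.ne' h0
        · exact (hβ j).not_gt hneg
    rw [hprod, ENNReal.mul_top (mul_ne_zero (mul_ne_zero
      (ENNReal.inv_ne_zero.2 ENNReal.ofReal_ne_top) (by positivity)) hQ.volume_ne_zero_s7)]
    exact le_top
  push Not at htop
  exact hS.tsum_volume_mul_prod_lavg_rpow_le_of_lavg_ne hη h𝒟 h𝒮𝒟 hQ hβ hρ hρ' hρβ
    fun i hi => ⟨hzero i hi, htop i hi⟩

end IsSparse

end Cubes

theorem sparse_sum_avg_le_general {n m : ℕ} (η : ℝ) (hη : 0 < η)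
    (β : Fin m → ℝ) (hβ : ∀ i, 0 ≤ β i) (hβsum : ∑ i, β i < 1) :
    ∃ C : ℝ, 0 < C ∧
      ∀ (𝒮 : Set (Set (Fin n → ℝ))), IsSparse η 𝒮 →
        (∃ 𝒟, IsDyadicGrid 𝒟 ∧ 𝒮 ⊆ 𝒟) →
        ∀ Q ∈ 𝒮, ∀ w : Fin m → (Fin n → ℝ) → ℝ≥0∞, (∀ i, Measurable (w i)) →
          (∑' Q' : {Q' // Q' ∈ 𝒮 ∧ Q' ⊆ Q},
              volume (Q' : Set (Fin n → ℝ)) * ∏ i, lavg (w i) Q'.1 ^ β i)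
            ≤ ENNReal.ofReal C * volume Q * ∏ i, lavg (w i) Q ^ β i := by
  obtain ⟨ρ, hρ, hρ', hρβ⟩ := exists_two_lt_rpow_le_two (Finset.sum_nonneg fun i _ => hβ i) hβsum
  set D := (ENNReal.ofReal η)⁻¹ * (1 + 2 * m * (1 - 2 * ρ⁻¹)⁻¹)
  have hD : D ≠ ⊤ := by
    have hρ₂ : 2 * ρ⁻¹ < 1 := by
      rw [← div_eq_mul_inv, ENNReal.div_lt_iff (Or.inl (zero_lt_two.trans hρ).ne') (Or.inl hρ'),
        one_mul]
      exact hρ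
    have : (1 - 2 * ρ⁻¹)⁻¹ ≠ ⊤ := ENNReal.inv_ne_top.2 (tsub_pos_of_lt hρ₂).ne'
    have : (ENNReal.ofReal η)⁻¹ ≠ ⊤ := ENNReal.inv_ne_top.2 (ENNReal.ofReal_pos.2 hη).ne'
    finiteness
  refine ⟨D.toReal, ENNReal.toReal_pos
    (mul_ne_zero (ENNReal.inv_ne_zero.2 ENNReal.ofReal_ne_top) (by positivity)) hD, ?_⟩
  rintro 𝒮 hS ⟨𝒟, h𝒟, h𝒮𝒟⟩ Q hQ w -
  rw [ENNReal.ofReal_toReal hD]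
  exact hS.tsum_volume_mul_prod_lavg_rpow_le hη h𝒟 h𝒮𝒟 (h𝒟.1 Q (h𝒮𝒟 hQ)) hβ
    (zero_lt_two.trans hρ).ne' hρ' hρβ

/-- If `β = ∑ βᵢ < 1` and `𝒮` is an `η`-sparse family of dyadic cubes, then for every `Q ∈ 𝒮`
and all weights `wᵢ`,
`∑_{Q' ∈ 𝒮, Q' ⊆ Q} |Q'| ∏ᵢ ⟨wᵢ⟩_{Q'}^{βᵢ} ≤ C(η,β,n) |Q| ∏ᵢ ⟨wᵢ⟩_Q^{βᵢ}`. -/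
theorem sparse_sum_avg_le {n m : ℕ} (η : ℝ) (hη : 0 < η) (hη1 : η ≤ 1)
    (β : Fin m → ℝ) (hβ : ∀ i, 0 ≤ β i) (hβsum : ∑ i, β i < 1) :
    ∃ C : ℝ, 0 < C ∧
      ∀ (𝒮 : Set (Set (Fin n → ℝ))), IsSparse η 𝒮 →
        (∃ 𝒟, IsDyadicGrid 𝒟 ∧ 𝒮 ⊆ 𝒟) →
        ∀ Q ∈ 𝒮, ∀ w : Fin m → (Fin n → ℝ) → ℝ≥0∞, (∀ i, Measurable (w i)) →
          (∑' Q' : {Q' // Q' ∈ 𝒮 ∧ Q' ⊆ Q},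
              volume (Q' : Set (Fin n → ℝ)) * ∏ i, lavg (w i) Q'.1 ^ β i)
            ≤ ENNReal.ofReal C * volume Q * ∏ i, lavg (w i) Q ^ β i :=
  sparse_sum_avg_le_general η hη β hβ hβsum

end
end

section
/- Multilinear Coifman–Rochberg estimate: for every 0 < δ < 1/m and all locally integrable functions f₁,…,f_m with ℳ(f⃗)(x) < ∞ a.e., the function (ℳ(f⃗))^δ is an A₁ weight with [(ℳ(f⃗))^δ]_{A₁} ≤ c_n/(1 − mδ), where ℳ(f⃗)(x) = sup_{Q ∋ x} ∏_{j=1}^m (1/|Q|)∫_Q |f_j| dy is the multilinear maximal function. -/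
/-!
Fix a cube `Q` and let `I = inf_Q ℳ(f⃗)`. A cube through a point of `Q` either lies in `3Q` or
is larger than `Q`; in the second case it sits inside a cube of at most `2ⁿ` times its volume
that contains `Q`, so its product of averages is at most `2^{nm} I`. Hence on `Q`,
`ℳ(f⃗) ≤ max (ℳ_{3Q}(f⃗), 2^{nm} I)`, where `ℳ_{3Q}` only sees the subcubes of `3Q`.
By Vitali's covering lemma and Hölder's inequality, `ℳ_{3Q}(f⃗)^{1/m}` is of weak type `(1, 1)`
on `Q` with constant `12ⁿ ∏ⱼ ⟨|fⱼ|⟩_{3Q}^{1/m} ≤ 12ⁿ I^{1/m}`, and Kolmogorov's inequality with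
exponent `mδ < 1` bounds `⟨ℳ_{3Q}(f⃗)^δ⟩_Q` by a multiple `12ⁿ / (1 - mδ)` of `I^δ`. So
`⟨ℳ(f⃗)^δ⟩_Q ≤ c_n (1 - mδ)⁻¹ ess inf_Q ℳ(f⃗)^δ`.
-/

open MeasureTheory Set Filter ENNReal

noncomputable section

/-- The multilinear maximal function `ℳ(f⃗)(x) = sup_{Q ∋ x} ∏ⱼ ⟨|fⱼ|⟩_Q`. -/
def multiMax {n m : ℕ} (f : Fin m → (Fin n → ℝ) → ℝ) (x : Fin n → ℝ) : ℝ≥0∞ :=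
  ⨆ (Q : Set (Fin n → ℝ)) (_ : IsCube Q) (_ : x ∈ Q),
    ∏ i, lavg (fun y => ENNReal.ofReal |f i y|) Q

/-- The `A₁` constant `[w]_{A₁} = sup_Q ⟨w⟩_Q · ess sup_Q w⁻¹`. -/
def A1Const {n : ℕ} (w : (Fin n → ℝ) → ℝ≥0∞) : ℝ≥0∞ :=
  ⨆ (Q : Set (Fin n → ℝ)) (_ : IsCube Q),
    lavg w Q * essSup (fun x => (w x)⁻¹) (volume.restrict Q)

namespace ENNReal

theorem tsum_prod_rpow_le {ι κ : Type*} (s : Finset ι) (c : ι → κ → ℝ≥0∞) {p : ι → ℝ}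
    (hp : ∑ i ∈ s, p i = 1) (h2p : ∀ i ∈ s, 0 ≤ p i) :
    ∑' k, ∏ i ∈ s, c i k ^ p i ≤ ∏ i ∈ s, (∑' k, c i k) ^ p i := by
  let _ : MeasurableSpace κ := ⊤
  simpa only [lintegral_count' measurable_from_top] using
    lintegral_prod_norm_pow_le (μ := Measure.count) s
      (fun i _ => measurable_from_top.aemeasurable) hp h2p

theorem tsum_two_rpow_neg_pow_le {s : ℝ} (hs0 : 0 < s) (hs1 : s ≤ 1) :
    ∑' k : ℕ, ((2 : ℝ≥0∞) ^ (-s)) ^ k ≤ ENNReal.ofReal (2 / s) := by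
  -- Bernoulli: `2 ^ (-s) = (1 - 1/2) ^ s ≤ 1 - s / 2`.
  have hbern : (2 : ℝ) ^ (-s) ≤ 1 - s / 2 := by
    have := rpow_one_add_le_one_add_mul_self (s := -1 / 2) (by norm_num) hs0.le hs1
    rw [Real.rpow_neg zero_le_two, ← Real.inv_rpow zero_le_two]
    convert this using 1 <;> norm_num
    ring
  have h2 : (2 : ℝ≥0∞) ^ (-s) = ENNReal.ofReal ((2 : ℝ) ^ (-s)) := by
    rw [← ENNReal.ofReal_rpow_of_pos zero_lt_two, ENNReal.ofReal_ofNat]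
  rw [ENNReal.tsum_geometric, h2, ← ENNReal.ofReal_one,
    ← ENNReal.ofReal_sub _ (by positivity), ← ENNReal.ofReal_inv_of_pos (by linarith)]
  refine ENNReal.ofReal_le_ofReal ?_
  rw [inv_le_comm₀ (by linarith) (by positivity), inv_div]
  linarith

theorem exists_two_pow_mul_lt_le {T a : ℝ≥0∞} (hT0 : T ≠ 0) (hT : T ≠ ⊤) (hTa : T < a)
    (ha : a ≠ ⊤) : ∃ k : ℕ, 2 ^ k * T < a ∧ a ≤ 2 ^ (k + 1) * T := by
  classical
  have hex : ∃ k : ℕ, a ≤ 2 ^ (k + 1) * T := by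
    obtain ⟨N, hN⟩ := ENNReal.exists_nat_gt (ENNReal.div_lt_top ha hT0).ne
    refine ⟨N, (ENNReal.div_le_iff hT0 hT).1 (hN.le.trans ?_)⟩
    exact_mod_cast (Nat.lt_two_pow_self.trans (Nat.pow_lt_pow_succ Nat.one_lt_two)).le
  refine ⟨Nat.find hex, ?_, Nat.find_spec hex⟩
  rcases hk : Nat.find hex with _ | j
  · simpa using hTa
  · exact not_le.1 (Nat.find_min hex (hk ▸ j.lt_succ_self))

theorem rpow_le_self_of_one_le {x : ℝ≥0∞} {z : ℝ} (hx : 1 ≤ x) (hz : z ≤ 1) :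
    x ^ z ≤ x :=
  (ENNReal.rpow_le_rpow_of_exponent_le hx hz).trans_eq (ENNReal.rpow_one x)


theorem two_pow_succ_rpow_mul_le {q : ℝ} {u V : ℝ≥0∞} (k : ℕ) (hq : q ≤ 1) (h : 2 ^ k * u ≤ V) :
    ((2 : ℝ≥0∞) ^ (k + 1)) ^ q * u ≤ 2 * (2 ^ (q - 1)) ^ k * V := by
  have hu : u ≤ 2⁻¹ ^ k * V := by
    rw [← ENNReal.inv_pow, mul_comm, ← div_eq_mul_inv,
      ENNReal.le_div_iff_mul_le (by simp) (by simp), mul_comm]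
    exact h
  have h2q : (2 : ℝ≥0∞) ^ q * 2⁻¹ = 2 ^ (q - 1) := by
    rw [ENNReal.rpow_sub _ _ two_ne_zero ofNat_ne_top, ENNReal.rpow_one, div_eq_mul_inv]
  calc ((2 : ℝ≥0∞) ^ (k + 1)) ^ q * u ≤ (2 ^ q) ^ (k + 1) * (2⁻¹ ^ k * V) := by
        rw [← ENNReal.rpow_natCast_mul, mul_comm ((k + 1 : ℕ) : ℝ), ENNReal.rpow_mul_natCast]
        gcongr
    _ = 2 ^ q * (2 ^ q * 2⁻¹) ^ k * V := by ring
    _ ≤ 2 * (2 ^ (q - 1)) ^ k * V := by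
        rw [h2q]
        gcongr
        exact ENNReal.rpow_le_self_of_one_le one_le_two hq

end ENNReal

namespace MeasureTheory

section Kolmogorov

variable {α : Type*} {G : α → ℝ≥0∞} {T : ℝ≥0∞} {q : ℝ}

theorem rpow_le_add_tsum_indicator (hT0 : T ≠ 0) (hT : T ≠ ⊤) (hq : 0 < q) {U : ℕ → Set α}
    (hU : ∀ k : ℕ, {x | 2 ^ k * T < G x} ⊆ U k) (x : α) :
    G x ^ q ≤ T ^ q + ∑' k : ℕ, (U k).indicator (fun _ => (2 ^ (k + 1) * T) ^ q) x := by
  rcases le_or_gt (G x) T with hle | hlt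
  · exact (ENNReal.rpow_le_rpow hle hq.le).trans le_self_add
  rcases eq_or_ne (G x) ⊤ with htop | hne
  · have hterm : ∀ k : ℕ, T ^ q ≤ (U k).indicator (fun _ => (2 ^ (k + 1) * T) ^ q) x := by
      intro k
      rw [indicator_of_mem (hU k (by
        show 2 ^ k * T < G x
        rw [htop]
        exact (ENNReal.mul_ne_top (ENNReal.pow_ne_top ofNat_ne_top) hT).lt_top))]
      exact ENNReal.rpow_le_rpow (le_mul_of_one_le_left' (one_le_pow₀ one_le_two)) hq.le
    have hsum := ENNReal.tsum_le_tsum hterm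
    rw [ENNReal.tsum_const_eq_top_of_ne_zero (ENNReal.rpow_pos (pos_iff_ne_zero.2 hT0) hT).ne',
      top_le_iff] at hsum
    simp [hsum]
  obtain ⟨k, hk, hk'⟩ := exists_two_pow_mul_lt_le hT0 hT hlt hne
  calc G x ^ q ≤ (2 ^ (k + 1) * T) ^ q := ENNReal.rpow_le_rpow hk' hq.le
    _ = (U k).indicator (fun _ => (2 ^ (k + 1) * T) ^ q) x :=
      (indicator_of_mem (hU k hk) (fun _ => (2 ^ (k + 1) * T) ^ q)).symm
    _ ≤ ∑' k : ℕ, (U k).indicator (fun _ => (2 ^ (k + 1) * T) ^ q) x := ENNReal.le_tsum k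
    _ ≤ _ := le_add_self

variable [MeasurableSpace α] {μ : Measure α}

theorem ae_eq_zero_of_forall_mul_meas_lt_eq_zero (hG : ∀ t, t * μ {x | t < G x} = 0) :
    ∀ᵐ x ∂μ, G x = 0 := by
  have hnull : ∀ k : ℕ, μ {x | (k : ℝ≥0∞)⁻¹ < G x} = 0 := fun k =>
    (mul_eq_zero.1 (hG _)).resolve_left (ENNReal.inv_ne_zero.2 (natCast_ne_top k))
  refine measure_mono_null (fun x hx => ?_) (measure_iUnion_null hnull)
  obtain ⟨k, hk⟩ := ENNReal.exists_inv_nat_lt hx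
  exact mem_iUnion.2 ⟨k, hk⟩

/-- Kolmogorov's inequality. `G` need not be measurable: `μ` acts on `{x | t < G x}` as an outer
measure. -/
theorem lintegral_rpow_le_of_forall_mul_meas_lt_le (hT : T ≠ ⊤) (hq0 : 0 < q) (hq1 : q < 1)
    (hG : ∀ t, t * μ {x | t < G x} ≤ T * μ univ) :
    ∫⁻ x, G x ^ q ∂μ ≤ ENNReal.ofReal (5 / (1 - q)) * T ^ q * μ univ := by
  rcases eq_or_ne T 0 with rfl | hT0
  · have hG0 := ae_eq_zero_of_forall_mul_meas_lt_eq_zero fun t => by simpa using hG t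
    have hGq : ∀ᵐ x ∂μ, G x ^ q = 0 := hG0.mono fun x hx => by simp [hx, hq0]
    rw [lintegral_congr_ae hGq, lintegral_zero]
    exact zero_le
  set U : ℕ → Set α := fun k => toMeasurable μ {x | 2 ^ k * T < G x}
  have hU : ∀ k, MeasurableSet (U k) := fun k => measurableSet_toMeasurable μ _
  have hlevel : ∀ k : ℕ,
      (2 ^ (k + 1) * T) ^ q * μ (U k) ≤ T ^ q * (2 * (2 ^ (q - 1)) ^ k * μ univ) := by
    intro k
    rw [measure_toMeasurable, ENNReal.mul_rpow_of_nonneg _ _ hq0.le, mul_comm _ (T ^ q),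
      mul_assoc]
    refine mul_le_mul_right (ENNReal.two_pow_succ_rpow_mul_le k hq1.le ?_) _
    refine (ENNReal.mul_le_mul_iff_right hT0 hT).1 ?_
    calc T * (2 ^ k * μ {x | 2 ^ k * T < G x}) = 2 ^ k * T * μ {x | 2 ^ k * T < G x} := by ring
      _ ≤ T * μ univ := hG _
  calc ∫⁻ x, G x ^ q ∂μ
      ≤ ∫⁻ x, T ^ q + ∑' k : ℕ, (U k).indicator (fun _ => (2 ^ (k + 1) * T) ^ q) x ∂μ :=
        lintegral_mono (rpow_le_add_tsum_indicator hT0 hT hq0 fun k => subset_toMeasurable μ _)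
    _ = T ^ q * μ univ + ∑' k : ℕ, (2 ^ (k + 1) * T) ^ q * μ (U k) := by
        rw [lintegral_add_left measurable_const, lintegral_const,
          lintegral_tsum fun k => (measurable_const.indicator (hU k)).aemeasurable]
        simp_rw [lintegral_indicator_const (hU _)]
    _ ≤ T ^ q * μ univ + ∑' k : ℕ, T ^ q * (2 * (2 ^ (q - 1)) ^ k * μ univ) :=
        add_le_add_right (ENNReal.tsum_le_tsum hlevel) _
    _ = (1 + 2 * ∑' k : ℕ, ((2 : ℝ≥0∞) ^ (-(1 - q))) ^ k) * (T ^ q * μ univ) := by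
        have hterm : ∀ k : ℕ, T ^ q * (2 * (2 ^ (q - 1)) ^ k * μ univ)
            = ((2 : ℝ≥0∞) ^ (q - 1)) ^ k * (2 * (T ^ q * μ univ)) := fun k => by ring
        simp_rw [hterm, ENNReal.tsum_mul_right, neg_sub]
        ring
    _ ≤ (1 + 2 * ENNReal.ofReal (2 / (1 - q))) * (T ^ q * μ univ) := by
        gcongr
        exact ENNReal.tsum_two_rpow_neg_pow_le (by linarith) (by linarith)
    _ ≤ ENNReal.ofReal (5 / (1 - q)) * T ^ q * μ univ := by
        rw [mul_assoc]
        gcongr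
        have hpos : 0 < 1 - q := by linarith
        rw [← ENNReal.ofReal_ofNat 2, ← ENNReal.ofReal_mul zero_le_two, ← ENNReal.ofReal_one,
          ← ENNReal.ofReal_add zero_le_one (by positivity)]
        refine ENNReal.ofReal_le_ofReal ?_
        rw [le_div_iff₀ hpos, add_mul, mul_assoc, div_mul_cancel₀ _ hpos.ne']
        linarith

end Kolmogorov

theorem tsum_setLIntegral_le_of_pairwiseDisjoint {α ι : Type*} [MeasurableSpace α]
    {μ : Measure α} {u : Set ι} (hu : u.Countable) {s : ι → Set α}
    (hs : ∀ p ∈ u, MeasurableSet (s p)) (hd : u.PairwiseDisjoint s) {Ω : Set α}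
    (hsΩ : ∀ p ∈ u, s p ⊆ Ω) (f : α → ℝ≥0∞) :
    ∑' p : u, ∫⁻ x in s p, f x ∂μ ≤ ∫⁻ x in Ω, f x ∂μ := by
  rw [← lintegral_biUnion hu hs hd]
  exact lintegral_mono_set (iUnion₂_subset hsΩ)

end MeasureTheory

namespace CoifmanRochberg

section Cubes

variable {n : ℕ} {a b x : Fin n → ℝ} {h r : ℝ}

def cube (a : Fin n → ℝ) (h : ℝ) : Set (Fin n → ℝ) :=
  univ.pi fun i => Ico (a i) (a i + h)

def tripleCube (a : Fin n → ℝ) (h : ℝ) : Set (Fin n → ℝ) :=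
  cube (fun i => a i - h) (3 * h)

theorem isCube_cube (a : Fin n → ℝ) (hh : 0 < h) : IsCube (cube a h) :=
  ⟨a, h, hh, rfl⟩

theorem mem_cube : x ∈ cube a h ↔ ∀ i, a i ≤ x i ∧ x i < a i + h := by
  simp [cube]

theorem measurableSet_cube : MeasurableSet (cube a h) :=
  .univ_pi fun _ => measurableSet_Ico

theorem volume_cube (a : Fin n → ℝ) (h : ℝ) : volume (cube a h) = ENNReal.ofReal h ^ n := by
  simp [cube, Real.volume_pi_Ico]

theorem volume_cube_ne_zero (a : Fin n → ℝ) (hh : 0 < h) : volume (cube a h) ≠ 0 := by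
  simp [volume_cube, hh]

theorem volume_cube_ne_top (a : Fin n → ℝ) (h : ℝ) : volume (cube a h) ≠ ⊤ := by
  simp [volume_cube]

theorem isCube_tripleCube (a : Fin n → ℝ) (hh : 0 < h) : IsCube (tripleCube a h) :=
  isCube_cube _ (by linarith)

theorem cube_subset_tripleCube (hh : 0 ≤ h) : cube a h ⊆ tripleCube a h := fun y hy => by
  rw [tripleCube, mem_cube]
  exact fun i => ⟨by linarith [(mem_cube.1 hy i).1], by linarith [(mem_cube.1 hy i).2]⟩

theorem volume_tripleCube (a : Fin n → ℝ) (h : ℝ) :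
    volume (tripleCube a h) = 3 ^ n * volume (cube a h) := by
  rw [tripleCube, volume_cube, volume_cube, ENNReal.ofReal_mul zero_le_three, mul_pow,
    ENNReal.ofReal_ofNat]

/-- The radius is capped by `h` to give Vitali's lemma a uniform bound on the radii of all
subcubes of `cube a h`, also when `n = 0`. -/
theorem cube_subset_closedBall (hr : 0 < r) (hh : 0 ≤ h) (hR : cube b r ⊆ cube a h) :
    cube b r ⊆ Metric.closedBall (fun i => b i + r / 2) (min (r / 2) h) := by
  have hc : (fun i => b i + r / 2) ∈ cube a h :=
    hR (mem_cube.2 fun i => ⟨by linarith, by linarith⟩)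
  intro y hy
  have hyQ := mem_cube.1 (hR hy)
  rw [mem_cube] at hy hc
  rw [Metric.mem_closedBall, dist_pi_le_iff (le_min (by linarith) hh)]
  intro i
  rw [Real.dist_eq, abs_sub_le_iff, le_min_iff, le_min_iff]
  refine ⟨⟨?_, ?_⟩, ?_, ?_⟩ <;> linarith [hy i, hc i, hyQ i]

theorem cube_subset_cube_inf_add (hxQ : x ∈ cube a h) (hxR : x ∈ cube b r) :
    cube a h ⊆ cube (a ⊓ b) (h + r) := by
  intro y hy
  rw [mem_cube] at hxQ hxR hy ⊢
  intro i
  simp only [Pi.inf_apply]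
  constructor
  · exact (min_le_left _ _).trans (hy i).1
  · rcases min_cases (a i) (b i) with ⟨hm, -⟩ | ⟨hm, -⟩ <;> rw [hm] <;>
      linarith [hy i, hxQ i, hxR i]

theorem lt_of_not_subset_tripleCube (hxQ : x ∈ cube a h) (hxR : x ∈ cube b r)
    (hR : ¬ cube b r ⊆ tripleCube a h) : h < r := by
  obtain ⟨z, hzR, hz⟩ := not_subset.1 hR
  rw [tripleCube, mem_cube] at hz
  push Not at hz
  obtain ⟨i, hi⟩ := hz
  have hx := (mem_cube.1 hxQ) i
  have hxR := (mem_cube.1 hxR) i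
  have hzR := (mem_cube.1 hzR) i
  by_cases hzi : a i - h ≤ z i
  · linarith [hi hzi]
  · linarith

end Cubes

section Averages

variable {n m : ℕ} {R R' : Set (Fin n → ℝ)}

def multiAvg (g : Fin m → (Fin n → ℝ) → ℝ≥0∞) (R : Set (Fin n → ℝ)) : ℝ≥0∞ :=
  ∏ i, lavg (g i) R

def localMultiMax (g : Fin m → (Fin n → ℝ) → ℝ≥0∞) (Ω : Set (Fin n → ℝ)) (x : Fin n → ℝ) :
    ℝ≥0∞ :=
  ⨆ (R : Set (Fin n → ℝ)) (_ : IsCube R) (_ : x ∈ R) (_ : R ⊆ Ω), multiAvg g R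

theorem multiAvg_le_multiMax (f : Fin m → (Fin n → ℝ) → ℝ) {x : Fin n → ℝ} (hR : IsCube R)
    (hx : x ∈ R) : multiAvg (fun i y => ENNReal.ofReal |f i y|) R ≤ multiMax f x :=
  le_iSup₂_of_le R hR (le_iSup_of_le hx le_rfl)

theorem multiAvg_le_localMultiMax (g : Fin m → (Fin n → ℝ) → ℝ≥0∞) {Ω : Set (Fin n → ℝ)}
    {x : Fin n → ℝ} (hR : IsCube R) (hx : x ∈ R) (hRΩ : R ⊆ Ω) :
    multiAvg g R ≤ localMultiMax g Ω x :=
  le_iSup₂_of_le R hR (le_iSup₂_of_le hx hRΩ le_rfl)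

theorem prod_setLIntegral_eq_volume_pow_mul_multiAvg (g : Fin m → (Fin n → ℝ) → ℝ≥0∞)
    (hR0 : volume R ≠ 0) (hR : volume R ≠ ⊤) :
    ∏ i, ∫⁻ y in R, g i y = volume R ^ m * multiAvg g R := by
  calc ∏ i, ∫⁻ y in R, g i y = ∏ i, volume R * lavg (g i) R :=
        Finset.prod_congr rfl fun i _ => (ENNReal.mul_div_cancel hR0 hR).symm
    _ = volume R ^ m * multiAvg g R := by
        rw [Finset.prod_mul_distrib, Finset.prod_const, Finset.card_fin, multiAvg]

theorem lavg_le_mul_lavg_of_subset (w : (Fin n → ℝ) → ℝ≥0∞) {K : ℝ≥0∞} (hRR' : R ⊆ R')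
    (hvol : volume R' ≤ K * volume R) (hR0 : volume R ≠ 0) (hR'0 : volume R' ≠ 0)
    (hR' : volume R' ≠ ⊤) : lavg w R ≤ K * lavg w R' := by
  have hR : volume R ≠ ⊤ := ne_top_of_le_ne_top hR' (measure_mono hRR')
  rw [lavg, ENNReal.div_le_iff hR0 hR]
  calc ∫⁻ y in R, w y ≤ ∫⁻ y in R', w y := lintegral_mono_set hRR'
    _ = lavg w R' * volume R' := (ENNReal.div_mul_cancel hR'0 hR').symm
    _ ≤ lavg w R' * (K * volume R) := by gcongr
    _ = K * lavg w R' * volume R := by ring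

theorem multiAvg_le_mul_multiAvg_of_subset (g : Fin m → (Fin n → ℝ) → ℝ≥0∞) {K : ℝ≥0∞}
    (hRR' : R ⊆ R') (hvol : volume R' ≤ K * volume R) (hR0 : volume R ≠ 0)
    (hR'0 : volume R' ≠ 0) (hR' : volume R' ≠ ⊤) : multiAvg g R ≤ K ^ m * multiAvg g R' := by
  calc multiAvg g R ≤ ∏ i, K * lavg (g i) R' :=
        Finset.prod_le_prod' fun i _ => lavg_le_mul_lavg_of_subset _ hRR' hvol hR0 hR'0 hR'
    _ = K ^ m * multiAvg g R' := by
        rw [Finset.prod_mul_distrib, Finset.prod_const, Finset.card_fin, multiAvg]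

theorem exists_multiAvg_le_of_not_subset_tripleCube (g : Fin m → (Fin n → ℝ) → ℝ≥0∞)
    {a b x : Fin n → ℝ} {h r : ℝ} (hh : 0 < h) (hxQ : x ∈ cube a h) (hxR : x ∈ cube b r)
    (hR : ¬ cube b r ⊆ tripleCube a h) :
    ∃ R', IsCube R' ∧ cube a h ⊆ R' ∧ multiAvg g (cube b r) ≤ (2 ^ n) ^ m * multiAvg g R' := by
  have hhr := lt_of_not_subset_tripleCube hxQ hxR hR
  refine ⟨cube (a ⊓ b) (h + r), isCube_cube _ (by linarith), cube_subset_cube_inf_add hxQ hxR,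
    multiAvg_le_mul_multiAvg_of_subset g ?_ ?_ (volume_cube_ne_zero _ (by linarith))
      (volume_cube_ne_zero _ (by linarith)) (volume_cube_ne_top _ _)⟩
  · simpa only [inf_comm, add_comm] using cube_subset_cube_inf_add hxR hxQ
  · rw [volume_cube, volume_cube, ← mul_pow, ← ENNReal.ofReal_ofNat,
      ← ENNReal.ofReal_mul zero_le_two]
    gcongr
    linarith

theorem multiMax_le_localMultiMax_max (f : Fin m → (Fin n → ℝ) → ℝ) {a x : Fin n → ℝ} {h : ℝ}
    (hh : 0 < h) (hx : x ∈ cube a h) :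
    multiMax f x ≤ max (localMultiMax (fun i y => ENNReal.ofReal |f i y|) (tripleCube a h) x)
      ((2 ^ n) ^ m * ⨅ y ∈ cube a h, multiMax f y) := by
  rw [multiMax]
  refine iSup₂_le fun R hR => iSup_le fun hxR => ?_
  obtain ⟨b, r, hr, rfl⟩ := hR
  change x ∈ cube b r at hxR
  change multiAvg _ (cube b r) ≤ _
  by_cases hsub : cube b r ⊆ tripleCube a h
  · exact le_max_of_le_left (multiAvg_le_localMultiMax _ (isCube_cube b hr) hxR hsub)
  · obtain ⟨R', hR', hQR', hle⟩ := exists_multiAvg_le_of_not_subset_tripleCube _ hh hx hxR hsub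
    refine le_max_of_le_right (hle.trans ?_)
    gcongr
    exact le_iInf₂ fun y hy => multiAvg_le_multiMax f hR' (hQR' hy)

end Averages

section WeakType

variable {n m : ℕ}

theorem volume_closedBall_four_mul_le (x : Fin n → ℝ) {ρ r : ℝ} (hρ : 0 ≤ ρ) (hρr : ρ ≤ r / 2)
    (b : Fin n → ℝ) : volume (Metric.closedBall x (4 * ρ)) ≤ 4 ^ n * volume (cube b r) := by
  have hr : 0 ≤ r := by linarith
  calc volume (Metric.closedBall x (4 * ρ)) = ENNReal.ofReal ((2 * (4 * ρ)) ^ n) := by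
        rw [Real.volume_pi_closedBall _ (by positivity), Fintype.card_fin]
    _ ≤ ENNReal.ofReal ((4 * r) ^ n) :=
        ENNReal.ofReal_le_ofReal (pow_le_pow_left₀ (by positivity) (by linarith) n)
    _ = 4 ^ n * volume (cube b r) := by
        rw [volume_cube, mul_pow, ENNReal.ofReal_mul (by positivity),
          ENNReal.ofReal_pow zero_le_four, ENNReal.ofReal_pow hr, ENNReal.ofReal_ofNat]

theorem exists_pairwiseDisjoint_cube_volume_le {S : Set (Fin n → ℝ)} {c : Fin n → ℝ} {s : ℝ}
    (hs : 0 < s) (b : (Fin n → ℝ) → Fin n → ℝ) (r : (Fin n → ℝ) → ℝ) (hr : ∀ x ∈ S, 0 < r x)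
    (hxR : ∀ x ∈ S, x ∈ cube (b x) (r x)) (hRΩ : ∀ x ∈ S, cube (b x) (r x) ⊆ cube c s) :
    ∃ u ⊆ S, u.Countable ∧ u.PairwiseDisjoint (fun p => cube (b p) (r p)) ∧
      volume S ≤ 4 ^ n * ∑' p : u, volume (cube (b p) (r p)) := by
  set center : (Fin n → ℝ) → Fin n → ℝ := fun x i => b x i + r x / 2
  set ρ : (Fin n → ℝ) → ℝ := fun x => min (r x / 2) s
  have hρ : ∀ x ∈ S, 0 < ρ x := fun x hx => lt_min (by linarith [hr x hx]) hs
  have hball : ∀ x ∈ S, cube (b x) (r x) ⊆ Metric.closedBall (center x) (ρ x) := fun x hx =>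
    cube_subset_closedBall (hr x hx) hs.le (hRΩ x hx)
  obtain ⟨u, huS, hdisj, hcover⟩ :=
    Vitali.exists_disjoint_subfamily_covering_enlargement_closedBall S center ρ s
      (fun x _ => min_le_right _ _) 4 (by norm_num)
  have hu : u.Countable := hdisj.countable_of_nonempty_interior fun p hp =>
    (Metric.nonempty_ball.2 (hρ p (huS hp))).mono Metric.ball_subset_interior_closedBall
  have := hu.to_subtype
  refine ⟨u, huS, hu, hdisj.mono_on fun p hp => hball p (huS hp), ?_⟩
  calc volume S ≤ volume (⋃ p : u, Metric.closedBall (center p) (4 * ρ p)) := by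
        refine measure_mono fun x hx => ?_
        obtain ⟨p, hp, hxp⟩ := hcover x hx
        exact mem_iUnion.2 ⟨⟨p, hp⟩, hxp (hball x hx (hxR x hx))⟩
    _ ≤ ∑' p : u, volume (Metric.closedBall (center p) (4 * ρ p)) := measure_iUnion_le _
    _ ≤ ∑' p : u, 4 ^ n * volume (cube (b p) (r p)) := ENNReal.tsum_le_tsum fun p =>
        volume_closedBall_four_mul_le _ (hρ p (huS p.2)).le (min_le_left _ _) _
    _ = 4 ^ n * ∑' p : u, volume (cube (b p) (r p)) := ENNReal.tsum_mul_left

theorem prod_setLIntegral_rpow_inv_eq (hm : m ≠ 0) (g : Fin m → (Fin n → ℝ) → ℝ≥0∞)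
    {R : Set (Fin n → ℝ)} (hR0 : volume R ≠ 0) (hR : volume R ≠ ⊤) :
    ∏ i, (∫⁻ y in R, g i y) ^ (m : ℝ)⁻¹ = volume R * multiAvg g R ^ (m : ℝ)⁻¹ := by
  rw [ENNReal.prod_rpow_of_nonneg (by positivity),
    prod_setLIntegral_eq_volume_pow_mul_multiAvg g hR0 hR,
    ENNReal.mul_rpow_of_nonneg _ _ (by positivity), ENNReal.pow_rpow_inv_natCast hm]

theorem mul_volume_lt_localMultiMax_rpow_le (hm : m ≠ 0) (g : Fin m → (Fin n → ℝ) → ℝ≥0∞)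
    (c : Fin n → ℝ) {s : ℝ} (hs : 0 < s) (t : ℝ≥0∞) :
    t * volume {x | t < localMultiMax g (cube c s) x ^ (m : ℝ)⁻¹}
      ≤ 4 ^ n * volume (cube c s) * multiAvg g (cube c s) ^ (m : ℝ)⁻¹ := by
  have hm' : (0 : ℝ) < m := by positivity
  set S := {x | t < localMultiMax g (cube c s) x ^ (m : ℝ)⁻¹}
  have hcube : ∀ x ∈ S, ∃ (b : Fin n → ℝ) (r : ℝ), 0 < r ∧ x ∈ cube b r ∧
      cube b r ⊆ cube c s ∧ t < multiAvg g (cube b r) ^ (m : ℝ)⁻¹ := by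
    intro x hx
    change t < _ at hx
    simp only [ENNReal.lt_rpow_inv_iff hm', localMultiMax, lt_iSup_iff] at hx
    obtain ⟨_, ⟨b, r, hr, rfl⟩, hxR, hRΩ, hlt⟩ := hx
    exact ⟨b, r, hr, hxR, hRΩ, (ENNReal.lt_rpow_inv_iff hm').2 hlt⟩
  choose! b r hr hxR hRΩ hlt using hcube
  obtain ⟨u, huS, hu, hdisj, hvol⟩ := exists_pairwiseDisjoint_cube_volume_le hs b r hr hxR hRΩ
  have := hu.to_subtype
  have hper : ∀ p ∈ S, t * volume (cube (b p) (r p))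
      ≤ ∏ i, (∫⁻ y in cube (b p) (r p), g i y) ^ (m : ℝ)⁻¹ := fun p hp => by
    rw [prod_setLIntegral_rpow_inv_eq hm g (volume_cube_ne_zero _ (hr p hp))
      (volume_cube_ne_top _ _), mul_comm]
    exact mul_le_mul_right (hlt p hp).le _
  calc t * volume S ≤ t * (4 ^ n * ∑' p : u, volume (cube (b p) (r p))) := by gcongr
    _ = 4 ^ n * ∑' p : u, t * volume (cube (b p) (r p)) := by
        rw [ENNReal.tsum_mul_left]
        ring
    _ ≤ 4 ^ n * ∑' p : u, ∏ i, (∫⁻ y in cube (b p) (r p), g i y) ^ (m : ℝ)⁻¹ := by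
        gcongr with p
        exact hper p (huS p.2)
    _ ≤ 4 ^ n * ∏ i, (∑' p : u, ∫⁻ y in cube (b p) (r p), g i y) ^ (m : ℝ)⁻¹ := by
        gcongr
        exact ENNReal.tsum_prod_rpow_le Finset.univ _ (by simp [hm]) fun i _ => by positivity
    _ ≤ 4 ^ n * ∏ i, (∫⁻ y in cube c s, g i y) ^ (m : ℝ)⁻¹ := by
        gcongr with i
        exact tsum_setLIntegral_le_of_pairwiseDisjoint hu (fun p _ => measurableSet_cube) hdisj
          (fun p hp => hRΩ p (huS hp)) _
    _ = 4 ^ n * volume (cube c s) * multiAvg g (cube c s) ^ (m : ℝ)⁻¹ := by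
        rw [prod_setLIntegral_rpow_inv_eq hm g (volume_cube_ne_zero _ hs) (volume_cube_ne_top _ _),
          mul_assoc]

end WeakType

section CubeEstimate

variable {n m : ℕ} {δ : ℝ}

theorem setLIntegral_ofReal_abs_cube_lt_top {f : (Fin n → ℝ) → ℝ} (hf : LocallyIntegrable f volume)
    (a : Fin n → ℝ) (h : ℝ) : ∫⁻ y in cube a h, ENNReal.ofReal |f y| < ⊤ := by
  have hK : IsCompact (univ.pi fun i => Icc (a i) (a i + h)) :=
    isCompact_univ_pi fun _ => isCompact_Icc
  have := ((hf.integrableOn_isCompact hK).mono_set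
    (pi_mono fun _ _ => Ico_subset_Icc_self)).hasFiniteIntegral
  simp only [hasFiniteIntegral_iff_enorm, Real.enorm_eq_ofReal_abs] at this
  exact this

theorem multiAvg_ne_top {f : Fin m → (Fin n → ℝ) → ℝ} (hf : ∀ i, LocallyIntegrable (f i) volume)
    (a : Fin n → ℝ) {h : ℝ} (hh : 0 < h) :
    multiAvg (fun i y => ENNReal.ofReal |f i y|) (cube a h) ≠ ⊤ :=
  (ENNReal.prod_lt_top fun i _ => ENNReal.div_lt_top
    (setLIntegral_ofReal_abs_cube_lt_top (hf i) a h).ne (volume_cube_ne_zero a hh)).ne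

theorem setLIntegral_localMultiMax_rpow_le (hm : m ≠ 0) (hδ0 : 0 < δ) (hδ : m * δ < 1)
    (g : Fin m → (Fin n → ℝ) → ℝ≥0∞) (a : Fin n → ℝ) {h : ℝ} (hh : 0 < h)
    (hJ : multiAvg g (tripleCube a h) ≠ ⊤) :
    ∫⁻ x in cube a h, localMultiMax g (tripleCube a h) x ^ δ
      ≤ ENNReal.ofReal (5 / (1 - m * δ)) * 12 ^ n * multiAvg g (tripleCube a h) ^ δ
        * volume (cube a h) := by
  have hm' : (m : ℝ) ≠ 0 := Nat.cast_ne_zero.2 hm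
  set J := multiAvg g (tripleCube a h)
  set G : (Fin n → ℝ) → ℝ≥0∞ := fun x => localMultiMax g (tripleCube a h) x ^ (m : ℝ)⁻¹
  set T : ℝ≥0∞ := 12 ^ n * J ^ (m : ℝ)⁻¹
  have hT : T ≠ ⊤ := ENNReal.mul_ne_top (by simp) (ENNReal.rpow_ne_top_of_nonneg (by positivity) hJ)
  have hweak : ∀ t, t * volume.restrict (cube a h) {x | t < G x}
      ≤ T * volume.restrict (cube a h) univ := by
    intro t
    calc t * volume.restrict (cube a h) {x | t < G x} ≤ t * volume {x | t < G x} := by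
          gcongr
          exact Measure.restrict_le_self
      _ ≤ 4 ^ n * volume (tripleCube a h) * J ^ (m : ℝ)⁻¹ :=
          mul_volume_lt_localMultiMax_rpow_le hm g _ (by linarith) t
      _ = T * volume.restrict (cube a h) univ := by
          rw [Measure.restrict_apply_univ, volume_tripleCube]
          simp only [T, show (12 : ℝ≥0∞) ^ n = 4 ^ n * 3 ^ n by rw [← mul_pow]; norm_num]
          ring
  have hTq : T ^ ((m : ℝ) * δ) ≤ 12 ^ n * J ^ δ := by
    rw [ENNReal.mul_rpow_of_nonneg _ _ (by positivity), ← ENNReal.rpow_mul,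
      inv_mul_cancel_left₀ hm']
    gcongr
    exact ENNReal.rpow_le_self_of_one_le (one_le_pow₀ (by norm_num)) hδ.le
  calc ∫⁻ x in cube a h, localMultiMax g (tripleCube a h) x ^ δ
      = ∫⁻ x in cube a h, G x ^ ((m : ℝ) * δ) := by
        simp only [G, ← ENNReal.rpow_mul, inv_mul_cancel_left₀ hm']
    _ ≤ ENNReal.ofReal (5 / (1 - m * δ)) * T ^ ((m : ℝ) * δ) * volume.restrict (cube a h) univ :=
        lintegral_rpow_le_of_forall_mul_meas_lt_le hT (by positivity) hδ hweak
    _ ≤ ENNReal.ofReal (5 / (1 - m * δ)) * (12 ^ n * J ^ δ) * volume (cube a h) := by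
        rw [Measure.restrict_apply_univ]
        gcongr
    _ = ENNReal.ofReal (5 / (1 - m * δ)) * 12 ^ n * J ^ δ * volume (cube a h) := by ring

theorem ofReal_five_div_mul_add_two_pow_le (hδ0 : 0 < δ) (hδ : m * δ < 1) :
    ENNReal.ofReal (5 / (1 - m * δ)) * 12 ^ n + 2 ^ n
      ≤ ENNReal.ofReal (6 * 12 ^ n / (1 - m * δ)) := by
  have hD : 0 < 1 - m * δ := by linarith
  have hD1 : 1 - m * δ ≤ 1 := by nlinarith [(Nat.cast_nonneg m : (0 : ℝ) ≤ m)]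
  rw [← ENNReal.ofReal_ofNat 12, ← ENNReal.ofReal_ofNat 2, ← ENNReal.ofReal_pow (by norm_num),
    ← ENNReal.ofReal_pow (by norm_num), ← ENNReal.ofReal_mul (by positivity),
    ← ENNReal.ofReal_add (by positivity) (by positivity)]
  refine ENNReal.ofReal_le_ofReal ?_
  have h2 : (2 : ℝ) ^ n ≤ 12 ^ n / (1 - m * δ) :=
    (pow_le_pow_left₀ zero_le_two (by norm_num) n).trans (le_div_self (by positivity) hD hD1)
  have h6 : 6 * (12 : ℝ) ^ n / (1 - m * δ) = 5 / (1 - m * δ) * 12 ^ n + 12 ^ n / (1 - m * δ) := by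
    ring
  linarith

theorem multiMax_rpow_le_localMultiMax_rpow_add (f : Fin m → (Fin n → ℝ) → ℝ) (hδ0 : 0 < δ)
    (hδ : m * δ ≤ 1) {a x : Fin n → ℝ} {h : ℝ} (hh : 0 < h) (hx : x ∈ cube a h) :
    multiMax f x ^ δ ≤ localMultiMax (fun i y => ENNReal.ofReal |f i y|) (tripleCube a h) x ^ δ
      + 2 ^ n * (⨅ y ∈ cube a h, multiMax f y) ^ δ := by
  set L := localMultiMax (fun i y => ENNReal.ofReal |f i y|) (tripleCube a h) x
  set I := ⨅ y ∈ cube a h, multiMax f y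
  calc multiMax f x ^ δ ≤ max L ((2 ^ n) ^ m * I) ^ δ :=
        ENNReal.rpow_le_rpow (multiMax_le_localMultiMax_max f hh hx) hδ0.le
    _ = max (L ^ δ) (((2 ^ n) ^ m * I) ^ δ) := ENNReal.max_rpow hδ0.le
    _ ≤ L ^ δ + ((2 ^ n) ^ m * I) ^ δ := max_le le_self_add le_add_self
    _ ≤ L ^ δ + 2 ^ n * I ^ δ := by
        rw [ENNReal.mul_rpow_of_nonneg _ _ hδ0.le, ← ENNReal.rpow_natCast_mul]
        gcongr
        exact ENNReal.rpow_le_self_of_one_le (one_le_pow₀ one_le_two) hδ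

theorem lavg_mul_essSup_le (hm : m ≠ 0) (hδ0 : 0 < δ) (hδ : m * δ < 1)
    (f : Fin m → (Fin n → ℝ) → ℝ) (hf : ∀ i, LocallyIntegrable (f i) volume) (a : Fin n → ℝ)
    {h : ℝ} (hh : 0 < h) :
    lavg (fun x => multiMax f x ^ δ) (cube a h) *
        essSup (fun x => (multiMax f x ^ δ)⁻¹) (volume.restrict (cube a h))
      ≤ ENNReal.ofReal (6 * 12 ^ n / (1 - m * δ)) := by
  set g : Fin m → (Fin n → ℝ) → ℝ≥0∞ := fun i y => ENNReal.ofReal |f i y|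
  set L := localMultiMax g (tripleCube a h)
  set I := ⨅ y ∈ cube a h, multiMax f y
  have hJI : multiAvg g (tripleCube a h) ≤ I := le_iInf₂ fun y hy =>
    multiAvg_le_multiMax f (isCube_tripleCube a hh) (cube_subset_tripleCube hh.le hy)
  have hJ : multiAvg g (tripleCube a h) ≠ ⊤ := multiAvg_ne_top hf _ (by linarith)
  have hint : ∫⁻ x in cube a h, multiMax f x ^ δ
      ≤ ENNReal.ofReal (6 * 12 ^ n / (1 - m * δ)) * I ^ δ * volume (cube a h) :=
    calc ∫⁻ x in cube a h, multiMax f x ^ δ ≤ ∫⁻ x in cube a h, L x ^ δ + 2 ^ n * I ^ δ :=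
          setLIntegral_mono' measurableSet_cube fun x hx =>
            multiMax_rpow_le_localMultiMax_rpow_add f hδ0 hδ.le hh hx
      _ = (∫⁻ x in cube a h, L x ^ δ) + 2 ^ n * I ^ δ * volume (cube a h) := by
          rw [lintegral_add_right _ measurable_const, setLIntegral_const]
      _ ≤ ENNReal.ofReal (5 / (1 - m * δ)) * 12 ^ n * I ^ δ * volume (cube a h)
            + 2 ^ n * I ^ δ * volume (cube a h) := by
          gcongr
          exact (setLIntegral_localMultiMax_rpow_le hm hδ0 hδ g a hh hJ).trans (by gcongr)
      _ = (ENNReal.ofReal (5 / (1 - m * δ)) * 12 ^ n + 2 ^ n) * I ^ δ * volume (cube a h) := by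
          ring
      _ ≤ _ := by gcongr; exact ofReal_five_div_mul_add_two_pow_le hδ0 hδ
  have hess : essSup (fun x => (multiMax f x ^ δ)⁻¹) (volume.restrict (cube a h)) ≤ (I ^ δ)⁻¹ :=
    essSup_le_of_ae_le _ ((ae_restrict_mem measurableSet_cube).mono fun x hx =>
      ENNReal.inv_le_inv.2 (ENNReal.rpow_le_rpow (iInf₂_le x hx) hδ0.le))
  calc _ ≤ ENNReal.ofReal (6 * 12 ^ n / (1 - m * δ)) * I ^ δ * (I ^ δ)⁻¹ := by
        refine mul_le_mul' ?_ hess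
        rw [lavg, ENNReal.div_le_iff (volume_cube_ne_zero a hh) (volume_cube_ne_top a h)]
        exact hint
    _ ≤ ENNReal.ofReal (6 * 12 ^ n / (1 - m * δ)) := by
        rw [mul_assoc]
        exact mul_le_of_le_one_right' (ENNReal.mul_inv_le_one _)

end CubeEstimate

end CoifmanRochberg

/-- Multilinear Coifman–Rochberg: for `0 < δ < 1/m`, `(ℳ f⃗)^δ ∈ A₁` with
`[(ℳ f⃗)^δ]_{A₁} ≤ c_n/(1 − mδ)`. -/
theorem multilinear_coifman_rochberg (n : ℕ) :
    ∃ c : ℝ, 0 < c ∧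
      ∀ (m : ℕ), 0 < m → ∀ δ : ℝ, 0 < δ → δ < 1 / (m : ℝ) →
      ∀ f : Fin m → (Fin n → ℝ) → ℝ, (∀ i, Measurable (f i)) →
        (∀ i, LocallyIntegrable (f i) volume) →
        (∀ᵐ x, multiMax f x < ⊤) →
        A1Const (fun x => multiMax f x ^ δ) ≤ ENNReal.ofReal (c / (1 - (m : ℝ) * δ)) := by
  refine ⟨6 * 12 ^ n, by positivity, fun m hm δ hδ0 hδ f _ hf _ => iSup₂_le fun Q hQ => ?_⟩
  obtain ⟨a, h, hh, rfl⟩ := hQ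
  have hmδ : (m : ℝ) * δ < 1 := by rwa [lt_div_iff₀ (by positivity), mul_comm] at hδ
  exact CoifmanRochberg.lavg_mul_essSup_le hm.ne' hδ0 hmδ f hf a hh

end
end
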